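/- Let c be an exclusive cycle in E and v ∈ c⁰. The module N_c^v over L_K(E) is graded simple: every nonzero graded submodule of N_c^v equals N_c^v. -/

import Mathlib

/-!
Because `c` is exclusive, a path that starts and ends on `c` runs along `c`, whose edges have
distinct sources; so the `q` of a basis element `pq*` of `N_c^v` is the unique walk of its length
around `c` from `v`. Given a nonzero homogeneous `m` in a graded submodule, pick `pq*` in its
support and apply the ghost path `(p r)*`, where `r` continues `q` around `c` for longer than any
path part in the support. This sends `pq*` to `(qr)*` and kills every other term: a surviving
term would also land on a walk around `c`, of the same length by homogeneity, and ghost edges act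
injectively on reduced elements. So the submodule contains `(qr)*`; edges shorten it to `v`, ghost
edges of `c` lengthen `v` to every `q*`, and edges build every `pq*` from `q*`.
-/

/-- A directed graph with vertex set `V`, edge set `E`, source map `s` and range map `r`. -/
structure DiGraph where
  V : Type
  E : Type
  s : E → V
  r : E → V

namespace DiGraph

variable (G : DiGraph)

/-- There is an edge from `u` to `w`. -/
def Step (u w : G.V) : Prop := ∃ e : G.E, G.s e = u ∧ G.r e = w

/-- `G.Reach u w` means `u ≥ w`: there is a (possibly trivial) directed path from `u` to `w`. -/
def Reach (u w : G.V) : Prop := Relation.ReflTransGen G.Step u w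

/-- The root `R(W)` of a set of vertices `W`. -/
def root (W : Set G.V) : Set G.V := {u | ∃ w ∈ W, G.Reach u w}

/-- A set `H` of vertices is hereditary if `u ∈ H` and `u ≥ w` imply `w ∈ H`. -/
def Hereditary (H : Set G.V) : Prop := ∀ u ∈ H, ∀ w, G.Reach u w → w ∈ H

/-- A vertex is regular if it emits at least one and only finitely many edges. -/
def Regular (v : G.V) : Prop := (G.s ⁻¹' {v}).Nonempty ∧ (G.s ⁻¹' {v}).Finite

/-- A set `H` is saturated if every regular vertex all of whose out-edges
have ranges in `H` lies in `H`. -/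
def Saturated (H : Set G.V) : Prop :=
  ∀ v, G.Regular v → (∀ e, G.s e = v → G.r e ∈ H) → v ∈ H

/-- A set of vertices is downwards directed if every two of its elements have a
common lower bound in it. -/
def DownDirected (W : Set G.V) : Prop :=
  ∀ u ∈ W, ∀ v ∈ W, ∃ w ∈ W, G.Reach u w ∧ G.Reach v w

/-- The Countable Separation Property of a set of vertices. -/
def CSP (W : Set G.V) : Prop := ∃ C : Set G.V, C.Countable ∧ W ⊆ G.root C

/-- The Inner Countable Separation Property of a set of vertices. -/
def ICSP (W : Set G.V) : Prop := ∃ C : Set G.V, C.Countable ∧ C ⊆ W ∧ W ⊆ G.root C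

/-- `G.IsPathFrom v l` : the list of edges `l` forms a directed path starting at `v`. -/
def IsPathFrom : (G : DiGraph) → G.V → List G.E → Prop
  | _, _, [] => True
  | G, v, e :: es => G.s e = v ∧ G.IsPathFrom (G.r e) es

/-- The end (range) vertex of a path `l` starting at `v`. -/
def pathEnd : (G : DiGraph) → G.V → List G.E → G.V
  | _, v, [] => v
  | G, _, e :: es => G.pathEnd (G.r e) es

/-- The set of vertices on a path `l` starting at `v`. -/
def pathVerts (v : G.V) (l : List G.E) : Set G.V := insert v {w | ∃ e ∈ l, G.r e = w}

/-- A cycle based at `v` : a nonempty closed path in which distinct edges have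
distinct sources. -/
def IsCycle (v : G.V) (l : List G.E) : Prop :=
  l ≠ [] ∧ G.IsPathFrom v l ∧ G.pathEnd v l = v ∧ (l.map G.s).Nodup

/-- A cycle is exclusive if no vertex on it is the base of a cycle distinct from it
(cycles being identified with their sets of edges). -/
def ExclusiveCycle (v : G.V) (l : List G.E) : Prop :=
  G.IsCycle v l ∧ ∀ u ∈ G.pathVerts v l, ∀ m, G.IsCycle u m → (∀ e, e ∈ m ↔ e ∈ l)

open Classical in
/-- Auxiliary reduction on reversed edge lists: cancel common initial segments. -/
noncomputable def redAux (G : DiGraph) : List G.E → List G.E → List G.E × List G.E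
  | a :: as, b :: bs => if a = b then redAux G as bs else (a :: as, b :: bs)
  | as, bs => (as, bs)

/-- The reduction function: `red (p, q)` cancels the common final edges of the
paths `p` and `q`, implementing `red(ee*q*) = q*` and `red(pee*q*) = red(pq*)`. -/
noncomputable def red (p q : List G.E) : List G.E × List G.E :=
  ((G.redAux p.reverse q.reverse).1.reverse, (G.redAux p.reverse q.reverse).2.reverse)

/-- The source vertex of an element `pq*` (with `q` a path starting at the base
vertex `v`): the source of `p` if `p` is nonempty, and `r(q)` otherwise. -/
def startVtx (v : G.V) : List G.E × List G.E → G.V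
  | ([], q) => G.pathEnd v q
  | (e :: _, _) => G.s e

/-- Membership in the set `Y` associated to a cycle `c` (based at `cv`, with edges
`cl`) and a vertex `v ∈ c⁰`: pairs `(p, q)` of paths with `r(p) = r(q) ∈ c⁰` and
`s(q) = v`. -/
def MemY (cv : G.V) (cl : List G.E) (v : G.V) (x : List G.E × List G.E) : Prop :=
  G.IsPathFrom (G.startVtx v x) x.1 ∧ G.IsPathFrom v x.2 ∧
    G.pathEnd (G.startVtx v x) x.1 = G.pathEnd v x.2 ∧
    G.pathEnd v x.2 ∈ G.pathVerts cv cl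

/-- The degree `|p| − |q|` of an element `pq*`. -/
def degOf (G : DiGraph) (x : List G.E × List G.E) : ℤ :=
  (x.1.length : ℤ) - (x.2.length : ℤ)

/-- The branching system `X`: reduced elements of `Y`. -/
def Xset (cv : G.V) (cl : List G.E) (v : G.V) : Set (List G.E × List G.E) :=
  {x | G.MemY cv cl v x ∧ G.red x.1 x.2 = x}

/-- The subset `X_w` of `X` of elements with source vertex `w`. -/
def Xvtx (cv : G.V) (cl : List G.E) (v : G.V) (w : G.V) : Set (List G.E × List G.E) :=
  {x ∈ G.Xset cv cl v | G.startVtx v x = w}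

/-- The subset `X_e` of `X` of elements of the form `red(e r s*)` with `e r s* ∈ Y`. -/
def Xedge (cv : G.V) (cl : List G.E) (v : G.V) (e : G.E) : Set (List G.E × List G.E) :=
  {x | ∃ rs : List G.E × List G.E, G.MemY cv cl v (e :: rs.1, rs.2) ∧
    x = G.red (e :: rs.1) rs.2}

/-- The map `σ_e : X_{r(e)} → X_e`, `pq* ↦ red(e p q*)`. -/
noncomputable def sigmaE (e : G.E) (x : List G.E × List G.E) : List G.E × List G.E :=
  G.red (e :: x.1) x.2

end DiGraph

noncomputable section
open Classical

variable (K : Type) [Field K] (G : DiGraph)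

/-- Generators of the Leavitt path algebra: vertices, edges and ghost edges. -/
abbrev LVGen (G : DiGraph) : Type := G.V ⊕ G.E ⊕ G.E

/-- The free algebra on the generators. -/
abbrev LFree : Type := FreeAlgebra K (LVGen G)

/-- Vertex generator. -/
def fv (v : G.V) : LFree K G := FreeAlgebra.ι K (Sum.inl v)
/-- Edge generator. -/
def fe (e : G.E) : LFree K G := FreeAlgebra.ι K (Sum.inr (Sum.inl e))
/-- Ghost edge generator. -/
def fg (e : G.E) : LFree K G := FreeAlgebra.ι K (Sum.inr (Sum.inr e))

/-- The defining relations of the Leavitt path algebra: the path algebra relations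
(V), (E) together with (CK1) and (CK2). -/
inductive LRel : LFree K G → LFree K G → Prop
  | vv : ∀ {v w : G.V}, v ≠ w → LRel (fv K G v * fv K G w) 0
  | v_idem : ∀ v : G.V, LRel (fv K G v * fv K G v) (fv K G v)
  | se : ∀ e : G.E, LRel (fv K G (G.s e) * fe K G e) (fe K G e)
  | er : ∀ e : G.E, LRel (fe K G e * fv K G (G.r e)) (fe K G e)
  | rg : ∀ e : G.E, LRel (fv K G (G.r e) * fg K G e) (fg K G e)
  | gs : ∀ e : G.E, LRel (fg K G e * fv K G (G.s e)) (fg K G e)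
  | ck1 : ∀ {e f : G.E}, e ≠ f → LRel (fg K G e * fe K G f) 0
  | ck1e : ∀ e : G.E, LRel (fg K G e * fe K G e) (fv K G (G.r e))
  | ck2 : ∀ (v : G.V) (h : (G.s ⁻¹' {v}).Finite), (G.s ⁻¹' {v}).Nonempty →
      LRel (fv K G v) (∑ e ∈ h.toFinset, fe K G e * fg K G e)

/-- The Leavitt path algebra `L_K(E)` of `G` over `K`. -/
abbrev LPA : Type := RingQuot (LRel K G)

/-- The image of a vertex in `L_K(E)`. -/
def lv (v : G.V) : LPA K G := RingQuot.mkAlgHom K (LRel K G) (fv K G v)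
/-- The image of an edge in `L_K(E)`. -/
def le (e : G.E) : LPA K G := RingQuot.mkAlgHom K (LRel K G) (fe K G e)
/-- The image of a ghost edge in `L_K(E)`. -/
def lg (e : G.E) : LPA K G := RingQuot.mkAlgHom K (LRel K G) (fg K G e)

/-- The element of `L_K(E)` associated to a path `p` (a list of edges). -/
def pProd (p : List G.E) : LPA K G := (p.map (le K G)).prod
/-- The element `q*` of `L_K(E)` associated to a path `q`. -/
def gProd (q : List G.E) : LPA K G := (q.reverse.map (lg K G)).prod

/-- The set of monomials `pq*` of degree `n` in `L_K(E)`. -/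
def MonSet (n : ℤ) : Set (LPA K G) :=
  {x | ∃ (u w : G.V) (p q : List G.E), G.IsPathFrom u p ∧ G.IsPathFrom w q ∧
    G.pathEnd u p = G.pathEnd w q ∧ (p.length : ℤ) - (q.length : ℤ) = n ∧
    x = lv K G u * pProd K G p * gProd K G q}

/-- The degree-`n` homogeneous component of `L_K(E)`: the `K`-linear span of the
monomials `pq*` with `|p| − |q| = n`. -/
def lpaComp (n : ℤ) : Submodule K (LPA K G) := Submodule.span K (MonSet K G n)

/-- A homogeneous element of `L_K(E)`. -/
def LHomog (x : LPA K G) : Prop := ∃ n : ℤ, x ∈ lpaComp K G n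

/-- The free `K`-module on the set of pairs `(p, q)`; the module `N_c = M(X)` is
the span of the basis elements indexed by `X`. -/
abbrev MFree : Type := (List G.E × List G.E) →₀ K

/-- The action of a vertex `w` on a basis element `pq*`:
`w · pq* = pq*` if `s(p) = w`, else `0`. -/
def vAct (v w : G.V) (x : List G.E × List G.E) : MFree K G :=
  if G.startVtx v x = w then Finsupp.single x 1 else 0

/-- The action of an edge `f` on a basis element `pq*`:
`f · pq* = red(f p q*)` if `s(p) = r(f)`, else `0`. -/
def eAct (v : G.V) (f : G.E) (x : List G.E × List G.E) : MFree K G :=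
  if G.startVtx v x = G.r f then Finsupp.single (G.red (f :: x.1) x.2) 1 else 0

/-- The action of a ghost edge `f*` on a basis element `pq*`:
`f* · pq* = σ_f⁻¹(pq*)` if `pq* ∈ X_f`, else `0`. -/
def gAct (v : G.V) (cl : List G.E) (f : G.E) (x : List G.E × List G.E) : MFree K G :=
  match x with
  | (e :: t, q) => if e = f then Finsupp.single (t, q) 1 else 0
  | ([], q) => if f ∈ cl ∧ G.s f = G.pathEnd v q then Finsupp.single ([], q ++ [f]) 1
      else 0

/-- Linear extension of an action on basis elements to the whole module. -/
def actM (F : List G.E × List G.E → MFree K G) (m : MFree K G) : MFree K G :=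
  m.sum fun x k => k • F x

/-- The action of `p* = eₙ* ⋯ e₁*` for a path `p = e₁ ⋯ eₙ`, applying `e₁*` first:
`(ep)* · x = p* · (e* · x)`. -/
def gPathAct (v : G.V) (cl : List G.E) : List G.E → MFree K G → MFree K G
  | [], m => m
  | e :: t, m => gPathAct v cl t (actM K G (gAct K G v cl e) m)

/-- The module `N_c^v = M(X)`: the `K`-span of the basis elements indexed by `X`. -/
def spanX (cv : G.V) (cl : List G.E) (v : G.V) : Submodule K (MFree K G) :=
  Submodule.span K
    {m : MFree K G | ∃ x ∈ G.Xset cv cl v, m = Finsupp.single x (1 : K)}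

/-- The degree-`n` homogeneous component of `N_c^v`. -/
def degComp (cv : G.V) (cl : List G.E) (v : G.V) (n : ℤ) : Submodule K (MFree K G) :=
  Submodule.span K
    {m : MFree K G | ∃ x ∈ G.Xset cv cl v, G.degOf x = n ∧ m = Finsupp.single x (1 : K)}

theorem List.exists_eq_append_cons_append_cons_of_not_nodup_map {α β : Type*} {f : α → β} :
    ∀ {l : List α}, ¬(l.map f).Nodup →
      ∃ A a B b C, l = A ++ a :: (B ++ b :: C) ∧ f a = f b
  | [], h => absurd List.nodup_nil h
  | x :: l, h => by
    rw [List.map_cons, List.nodup_cons, not_and_or, not_not] at h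
    rcases h with h | h
    · obtain ⟨y, hy, hxy⟩ := List.mem_map.1 h
      obtain ⟨B, C, rfl⟩ := List.append_of_mem hy
      exact ⟨[], x, B, y, C, rfl, hxy.symm⟩
    · obtain ⟨A, a, B, b, C, rfl, hab⟩ := exists_eq_append_cons_append_cons_of_not_nodup_map h
      exact ⟨x :: A, a, B, b, C, rfl, hab⟩

namespace DiGraph

variable {G}

@[simp] lemma isPathFrom_nil (u : G.V) : G.IsPathFrom u [] := by simp [IsPathFrom]

@[simp] lemma isPathFrom_cons {u : G.V} {e : G.E} {t : List G.E} :
    G.IsPathFrom u (e :: t) ↔ G.s e = u ∧ G.IsPathFrom (G.r e) t := by simp [IsPathFrom]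

@[simp] lemma pathEnd_nil (u : G.V) : G.pathEnd u [] = u := by simp [pathEnd]

@[simp] lemma pathEnd_cons (u : G.V) (e : G.E) (t : List G.E) :
    G.pathEnd u (e :: t) = G.pathEnd (G.r e) t := by simp [pathEnd]

@[simp] lemma pathEnd_append (u : G.V) (A B : List G.E) :
    G.pathEnd u (A ++ B) = G.pathEnd (G.pathEnd u A) B := by
  induction A generalizing u <;> simp [*]

@[simp] lemma isPathFrom_append {u : G.V} {A B : List G.E} :
    G.IsPathFrom u (A ++ B) ↔ G.IsPathFrom u A ∧ G.IsPathFrom (G.pathEnd u A) B := by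
  induction A generalizing u <;> simp [*, and_assoc]

/-- Loop erasure: cutting out the segment between two edges with a common source keeps
the walk closed and its first edge. -/
lemma exists_isCycle_cons {u : G.V} {e : G.E} {t : List G.E}
    (hp : G.IsPathFrom u (e :: t)) (hend : G.pathEnd u (e :: t) = u) :
    ∃ t', G.IsCycle u (e :: t') := by
  induction hn : t.length using Nat.strong_induction_on generalizing t with
  | _ n ih =>
  by_cases hnd : ((e :: t).map G.s).Nodup
  · exact ⟨t, List.cons_ne_nil _ _, hp, hend, hnd⟩
  obtain ⟨A, a, B, b, C, hl, hab⟩ :=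
    List.exists_eq_append_cons_append_cons_of_not_nodup_map hnd
  rw [hl] at hp hend
  simp only [isPathFrom_append, isPathFrom_cons, pathEnd_append, pathEnd_cons] at hp hend
  obtain ⟨hpA, ha, hpB, hb, hpC⟩ := hp
  cases A with
  | nil =>
    obtain ⟨rfl, rfl⟩ := List.cons_eq_cons.1 hl
    rw [pathEnd_nil] at ha
    refine ih B.length (by simp [← hn]) (isPathFrom_cons.2 ⟨ha, hpB⟩) ?_ rfl
    rw [pathEnd_cons, ← hb, ← hab, ha]
  | cons e' A =>
    obtain ⟨rfl, rfl⟩ := List.cons_eq_cons.1 hl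
    refine ih (A ++ b :: C).length (by simp [← hn]) ?_ ?_ rfl
    · rw [← List.cons_append]
      exact isPathFrom_append.2 ⟨hpA, isPathFrom_cons.2 ⟨hab ▸ ha, hpC⟩⟩
    · simpa using hend

lemma pathEnd_concat (u : G.V) (A : List G.E) (e : G.E) : G.pathEnd u (A ++ [e]) = G.r e := by
  simp

lemma range_mem_pathVerts {w : G.V} {A : List G.E} {e : G.E} (he : e ∈ A) :
    G.r e ∈ G.pathVerts w A :=
  Or.inr ⟨e, he, rfl⟩

lemma exists_eq_append_of_mem_pathVerts {w u : G.V} {A : List G.E}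
    (hu : u ∈ G.pathVerts w A) : ∃ A₁ A₂, A = A₁ ++ A₂ ∧ G.pathEnd w A₁ = u := by
  rcases hu with rfl | ⟨e, he, rfl⟩
  · exact ⟨[], A, rfl, pathEnd_nil _⟩
  · obtain ⟨s₁, s₂, rfl⟩ := List.append_of_mem he
    exact ⟨s₁ ++ [e], s₂, by simp, pathEnd_concat w s₁ e⟩

section Cycle

variable {cv : G.V} {cl : List G.E}

lemma IsCycle.exists_path (hcy : G.IsCycle cv cl) {u w : G.V}
    (hw : w ∈ G.pathVerts cv cl) (hu : u ∈ G.pathVerts cv cl) :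
    ∃ ρ, G.IsPathFrom w ρ ∧ G.pathEnd w ρ = u := by
  obtain ⟨-, hp, hend, -⟩ := hcy
  obtain ⟨A₁, A₂, hA, rfl⟩ := exists_eq_append_of_mem_pathVerts hw
  obtain ⟨B₁, B₂, hB, rfl⟩ := exists_eq_append_of_mem_pathVerts hu
  have hA₂ : G.pathEnd (G.pathEnd cv A₁) A₂ = cv := by rw [← pathEnd_append, ← hA, hend]
  have hpA := isPathFrom_append.1 (hA ▸ hp)
  have hpB := isPathFrom_append.1 (hB ▸ hp)
  exact ⟨A₂ ++ B₁, isPathFrom_append.2 ⟨hpA.2, by rw [hA₂]; exact hpB.1⟩,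
    by rw [pathEnd_append, hA₂]⟩

lemma IsCycle.exists_mem_src_eq (hcy : G.IsCycle cv cl) {u : G.V}
    (hu : u ∈ G.pathVerts cv cl) : ∃ e ∈ cl, G.s e = u := by
  obtain ⟨hne, hp, hend, -⟩ := hcy
  obtain ⟨A, B, rfl, rfl⟩ := exists_eq_append_of_mem_pathVerts hu
  rw [isPathFrom_append] at hp
  cases B with
  | cons e B => exact ⟨e, by simp, (isPathFrom_cons.1 hp.2).1⟩
  | nil =>
    rw [List.append_nil] at hne hend ⊢
    obtain ⟨e, t, rfl⟩ := List.exists_cons_of_ne_nil hne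
    exact ⟨e, List.mem_cons_self, by rw [hend]; exact (isPathFrom_cons.1 hp.1).1⟩

lemma IsCycle.exists_path_length (hcy : G.IsCycle cv cl) (n : ℕ) :
    ∀ {u : G.V}, u ∈ G.pathVerts cv cl →
      ∃ r, r.length = n ∧ G.IsPathFrom u r ∧ r ⊆ cl := by
  induction n with
  | zero => exact fun _ => ⟨[], rfl, isPathFrom_nil _, List.nil_subset _⟩
  | succ n ih =>
    intro u hu
    obtain ⟨e, he, rfl⟩ := hcy.exists_mem_src_eq hu
    obtain ⟨r, hlen, hp, hsub⟩ := ih (range_mem_pathVerts he)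
    exact ⟨e :: r, by simp [hlen], isPathFrom_cons.2 ⟨rfl, hp⟩,
      List.cons_subset.2 ⟨he, hsub⟩⟩

lemma eq_of_isPathFrom_of_subset (hnd : (cl.map G.s).Nodup) :
    ∀ {u : G.V} {q₁ q₂ : List G.E}, G.IsPathFrom u q₁ → G.IsPathFrom u q₂ →
      q₁ ⊆ cl → q₂ ⊆ cl → q₁.length = q₂.length → q₁ = q₂
  | _, [], [], _, _, _, _, _ => rfl
  | _, [], _ :: _, _, _, _, _, hlen => absurd hlen (by simp)
  | _, _ :: _, [], _, _, _, _, hlen => absurd hlen (by simp)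
  | _, e₁ :: t₁, e₂ :: t₂, h₁, h₂, s₁, s₂, hlen => by
    rw [isPathFrom_cons] at h₁ h₂
    rw [List.cons_subset] at s₁ s₂
    obtain rfl : e₁ = e₂ :=
      List.inj_on_of_nodup_map hnd s₁.1 s₂.1 (h₁.1.trans h₂.1.symm)
    rw [eq_of_isPathFrom_of_subset hnd h₁.2 h₂.2 s₁.2 s₂.2 (by simpa using hlen)]

/-- A path leaving the exclusive cycle and returning to it closes up, along the cycle, to a
closed walk whose loop erasure is a cycle through its first edge. -/
lemma ExclusiveCycle.subset_of_isPathFrom (hc : G.ExclusiveCycle cv cl) :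
    ∀ {u : G.V} {q : List G.E}, u ∈ G.pathVerts cv cl → G.IsPathFrom u q →
      G.pathEnd u q ∈ G.pathVerts cv cl → q ⊆ cl
  | _, [], _, _, _ => List.nil_subset _
  | u, e :: t, hu, hp, hend => by
    obtain ⟨ρ, hρ, hρend⟩ := hc.1.exists_path hend hu
    obtain ⟨t', hcyc⟩ := exists_isCycle_cons (t := t ++ ρ)
      (by rw [← List.cons_append]; exact isPathFrom_append.2 ⟨hp, hρ⟩)
      (by rw [← List.cons_append, pathEnd_append, hρend])
    have he : e ∈ cl := (hc.2 u hu _ hcyc e).1 List.mem_cons_self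
    rw [isPathFrom_cons] at hp
    rw [pathEnd_cons] at hend
    exact List.cons_subset.2 ⟨he, hc.subset_of_isPathFrom (range_mem_pathVerts he) hp.2 hend⟩

end Cycle

lemma redAux_fst_length_le (a b : List G.E) : (G.redAux a b).1.length ≤ a.length := by
  induction a generalizing b with
  | nil => cases b <;> simp [redAux]
  | cons x xs ih =>
    cases b with
    | nil => simp [redAux]
    | cons y ys =>
      rw [redAux]
      split
      · exact (ih ys).trans (Nat.le_succ _)
      · exact le_rfl

lemma redAux_eq_self_iff {a b : List G.E} :
    G.redAux a b = (a, b) ↔ a = [] ∨ b = [] ∨ a.head? ≠ b.head? := by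
  cases a with
  | nil => cases b <;> simp [redAux]
  | cons x xs =>
    cases b with
    | nil => simp [redAux]
    | cons y ys =>
      rw [redAux]
      by_cases h : x = y
      · subst h
        rw [if_pos rfl]
        simp only [reduceCtorEq, List.head?_cons, ne_eq, not_true_eq_false, or_self, iff_false]
        intro heq
        have := congrArg (fun p => p.1.length) heq
        simp only [List.length_cons] at this
        exact absurd (redAux_fst_length_le xs ys) (by omega)
      · simp [h]

lemma red_eq_self_iff {p q : List G.E} :
    G.red p q = (p, q) ↔ p = [] ∨ q = [] ∨ p.getLast? ≠ q.getLast? := by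
  have : G.red p q = (p, q) ↔ G.redAux p.reverse q.reverse = (p.reverse, q.reverse) := by
    simp only [red, Prod.ext_iff, List.reverse_eq_iff]
  rw [this, redAux_eq_self_iff]
  simp

@[simp] lemma red_nil_left (q : List G.E) : G.red [] q = ([], q) :=
  red_eq_self_iff.2 (Or.inl rfl)

lemma red_singleton_append_singleton (q : List G.E) (e : G.E) :
    G.red [e] (q ++ [e]) = ([], q) := by
  simp [red, redAux]

section Xset

variable {cv : G.V} {cl : List G.E} {v : G.V}

lemma mem_Xset_nil_iff {q : List G.E} :
    ([], q) ∈ G.Xset cv cl v ↔ G.IsPathFrom v q ∧ G.pathEnd v q ∈ G.pathVerts cv cl := by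
  simp [Xset, MemY, startVtx]

lemma startVtx_tail_of_memY {e : G.E} {t q : List G.E} (h : G.MemY cv cl v (e :: t, q)) :
    G.startVtx v (t, q) = G.r e := by
  obtain ⟨hp, -, hend, -⟩ := h
  simp only [startVtx, isPathFrom_cons, pathEnd_cons] at hp hend
  cases t with
  | nil => simpa [startVtx] using hend.symm
  | cons e' t => exact (isPathFrom_cons.1 hp.2).1

lemma mem_Xset_of_cons_mem {e : G.E} {t q : List G.E} (h : (e :: t, q) ∈ G.Xset cv cl v) :
    (t, q) ∈ G.Xset cv cl v := by
  obtain ⟨hY, hred⟩ := h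
  have hst := startVtx_tail_of_memY hY
  obtain ⟨hp, hq, hend, hc⟩ := hY
  simp only [startVtx, isPathFrom_cons, pathEnd_cons] at hp hend
  refine ⟨⟨by rw [hst]; exact hp.2, hq, by rw [hst]; exact hend, hc⟩, ?_⟩
  rw [red_eq_self_iff] at hred ⊢
  rcases hred with h | h | h
  · exact absurd h (List.cons_ne_nil _ _)
  · exact Or.inr (Or.inl h)
  · cases t with
    | nil => exact Or.inl rfl
    | cons e' t => exact Or.inr (Or.inr (by rwa [List.getLast?_cons_cons] at h))

end Xset

end DiGraph

section Module

variable {K G}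

lemma actM_single_one (F : List G.E × List G.E → MFree K G) (y : List G.E × List G.E) :
    actM K G F (Finsupp.single y 1) = F y := by
  simp [actM]

lemma actM_eq_linearCombination (F : List G.E × List G.E → MFree K G) :
    actM K G F = Finsupp.linearCombination K F :=
  funext fun m => (Finsupp.linearCombination_apply K m).symm

variable (v : G.V) (cl : List G.E)

def gPathActₗ (L : List G.E) : MFree K G →ₗ[K] MFree K G where
  toFun := gPathAct K G v cl L
  map_add' := by
    induction L with
    | nil => exact fun _ _ => rfl
    | cons f L ih => intro a b; simp only [gPathAct, actM_eq_linearCombination, map_add, ih]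
  map_smul' := by
    induction L with
    | nil => exact fun _ _ => rfl
    | cons f L ih => intro c a; simp only [gPathAct, actM_eq_linearCombination, map_smul, ih]

@[simp] lemma gPathActₗ_apply (L : List G.E) (m : MFree K G) :
    gPathActₗ v cl L m = gPathAct K G v cl L m := rfl

lemma gPathAct_zero (L : List G.E) : gPathAct K G v cl L 0 = 0 :=
  map_zero (gPathActₗ v cl L)

lemma gPathAct_cons_single (f : G.E) (L : List G.E) (y : List G.E × List G.E) :
    gPathAct K G v cl (f :: L) (Finsupp.single y 1) = gPathAct K G v cl L (gAct K G v cl f y) := by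
  rw [gPathAct, actM_single_one]

lemma gPathAct_mem {P : Submodule K (MFree K G)}
    (hgact : ∀ f, ∀ m ∈ P, actM K G (gAct K G v cl f) m ∈ P) :
    ∀ (L : List G.E) {m : MFree K G}, m ∈ P → gPathAct K G v cl L m ∈ P
  | [], _, hm => hm
  | f :: L, _, hm => gPathAct_mem hgact L (hgact f _ hm)

lemma gPathAct_append_single (p r q : List G.E) :
    gPathAct K G v cl (p ++ r) (Finsupp.single (p, q) 1) =
      gPathAct K G v cl r (Finsupp.single ([], q) 1) := by
  induction p with
  | nil => rfl
  | cons e p ih => rw [List.cons_append, gPathAct_cons_single, gAct, if_pos rfl, ih]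

lemma gPathAct_single_nil {q r : List G.E} (hr : G.IsPathFrom (G.pathEnd v q) r) (hrc : r ⊆ cl) :
    gPathAct K G v cl r (Finsupp.single ([], q) 1) = Finsupp.single ([], q ++ r) 1 := by
  induction r generalizing q with
  | nil => simp [gPathAct]
  | cons f r ih =>
    rw [DiGraph.isPathFrom_cons] at hr
    rw [List.cons_subset] at hrc
    rw [gPathAct_cons_single, gAct, if_pos ⟨hrc.1, hr.1⟩,
      ih (by rw [DiGraph.pathEnd_concat]; exact hr.2) hrc.2, List.append_assoc,
      List.singleton_append]

end Module

section Ghost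

open DiGraph

variable {K G} {cv : G.V} {cl : List G.E} {v : G.V}

lemma gAct_eq_zero_or_single {y : List G.E × List G.E} (hy : y ∈ G.Xset cv cl v) (f : G.E) :
    gAct K G v cl f y = 0 ∨ ∃ z ∈ G.Xset cv cl v, gAct K G v cl f y = Finsupp.single z 1 ∧
      z.1 = y.1.tail ∧ G.degOf z = G.degOf y - 1 := by
  obtain ⟨_ | ⟨e, t⟩, q⟩ := y
  · simp only [gAct]
    split_ifs with h
    · rw [mem_Xset_nil_iff] at hy
      refine Or.inr ⟨([], q ++ [f]), mem_Xset_nil_iff.2 ⟨?_, ?_⟩, rfl, rfl, ?_⟩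
      · exact isPathFrom_append.2 ⟨hy.1, by simp [h.2]⟩
      · rw [pathEnd_concat]; exact range_mem_pathVerts h.1
      · simp only [degOf, List.length_nil, List.length_append, List.length_singleton]
        push_cast; ring
    · exact Or.inl rfl
  · simp only [gAct]
    split_ifs with h
    · subst h
      refine Or.inr ⟨(t, q), mem_Xset_of_cons_mem hy, rfl, rfl, ?_⟩
      simp only [degOf, List.length_cons]
      push_cast; ring
    · exact Or.inl rfl

lemma gAct_eq_single {f : G.E} {y z : List G.E × List G.E}
    (h : gAct K G v cl f y = Finsupp.single z 1) :
    y = (f :: z.1, z.2) ∨ y.1 = [] ∧ z = ([], y.2 ++ [f]) := by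
  obtain ⟨_ | ⟨e, t⟩, q⟩ := y <;> simp only [gAct] at h <;> split_ifs at h with hf
  · exact Or.inr ⟨rfl, (Finsupp.single_left_injective one_ne_zero h).symm⟩
  · exact absurd h.symm (Finsupp.single_ne_zero.2 one_ne_zero)
  · subst hf
    exact Or.inl (by rw [← Finsupp.single_left_injective one_ne_zero h])
  · exact absurd h.symm (Finsupp.single_ne_zero.2 one_ne_zero)

/-- `f*` is injective on reduced basis elements: `([f], q ++ [f])`, the only other candidate
preimage of `([], q ++ [f])`, is not reduced. -/
lemma eq_of_gAct_eq_single {f : G.E} {y y' z : List G.E × List G.E}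
    (hy : G.red y.1 y.2 = y) (hy' : G.red y'.1 y'.2 = y')
    (h : gAct K G v cl f y = Finsupp.single z 1) (h' : gAct K G v cl f y' = Finsupp.single z 1) :
    y = y' := by
  have not_red : ∀ {a b : List G.E × List G.E}, G.red a.1 a.2 = a → a = (f :: z.1, z.2) →
      z ≠ ([], b.2 ++ [f]) := by
    rintro a b ha rfl rfl
    simp [red_singleton_append_singleton] at ha
  rcases gAct_eq_single h with rfl | ⟨hy1, rfl⟩ <;>
    rcases gAct_eq_single h' with h'' | ⟨hy1', hz⟩
  · exact h''.symm
  · exact absurd hz (not_red hy rfl)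
  · exact absurd rfl (not_red hy' h'')
  · exact Prod.ext (hy1.trans hy1'.symm) (List.append_cancel_right (congrArg Prod.snd hz))

lemma gPathAct_single_eq_zero_or (L : List G.E) :
    ∀ {y : List G.E × List G.E}, y ∈ G.Xset cv cl v →
      gPathAct K G v cl L (Finsupp.single y 1) = 0 ∨
      ∃ z ∈ G.Xset cv cl v, gPathAct K G v cl L (Finsupp.single y 1) = Finsupp.single z 1 ∧
        z.1 = y.1.drop L.length ∧ G.degOf z = G.degOf y - L.length := by
  induction L with
  | nil => exact fun {y} hy => Or.inr ⟨y, hy, rfl, rfl, by simp⟩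
  | cons f L ih =>
    intro y hy
    rw [gPathAct_cons_single]
    rcases gAct_eq_zero_or_single (K := K) hy f with h | ⟨w, hw, h, hw1, hwd⟩
    · exact Or.inl (by rw [h, gPathAct_zero])
    rw [h]
    refine (ih hw).imp_right fun ⟨z, hz, hwz, hz1, hzd⟩ => ⟨z, hz, hwz, ?_, ?_⟩
    · rw [hz1, hw1, List.drop_tail, List.length_cons]
    · rw [hzd, hwd, List.length_cons]; push_cast; ring

lemma eq_of_gPathAct_single_eq (L : List G.E) :
    ∀ {y y' z : List G.E × List G.E}, y ∈ G.Xset cv cl v → y' ∈ G.Xset cv cl v →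
      gPathAct K G v cl L (Finsupp.single y 1) = Finsupp.single z 1 →
      gPathAct K G v cl L (Finsupp.single y' 1) = Finsupp.single z 1 → y = y' := by
  induction L with
  | nil => exact fun _ _ h h' => Finsupp.single_left_injective one_ne_zero (h.trans h'.symm)
  | cons f L ih =>
    intro y y' z hy hy' h h'
    rw [gPathAct_cons_single] at h h'
    have step : ∀ {a}, a ∈ G.Xset cv cl v →
        gPathAct K G v cl L (gAct K G v cl f a) = Finsupp.single z 1 →
        ∃ w ∈ G.Xset cv cl v, gAct K G v cl f a = Finsupp.single w 1 := by
      intro a ha ha'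
      rcases gAct_eq_zero_or_single (K := K) ha f with h0 | ⟨w, hw, hw', -⟩
      · rw [h0, gPathAct_zero] at ha'
        exact absurd ha'.symm (Finsupp.single_ne_zero.2 one_ne_zero)
      · exact ⟨w, hw, hw'⟩
    obtain ⟨w, hw, hyw⟩ := step hy h
    obtain ⟨w', hw', hyw'⟩ := step hy' h'
    rw [hyw] at h
    rw [hyw'] at h'
    obtain rfl := ih hw hw' h h'
    exact eq_of_gAct_eq_single hy.2 hy'.2 hyw hyw'

end Ghost

section Exclusive

open DiGraph

variable {K G} {cv : G.V} {cl : List G.E} {v : G.V}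

lemma degComp_eq_supported (n : ℤ) :
    degComp K G cv cl v n = Finsupp.supported K K {y | y ∈ G.Xset cv cl v ∧ G.degOf y = n} := by
  rw [degComp, Finsupp.supported_eq_span_single]
  congr 1
  ext m
  constructor
  · rintro ⟨y, hy, hyn, rfl⟩
    exact ⟨y, ⟨hy, hyn⟩, rfl⟩
  · rintro ⟨y, ⟨hy, hyn⟩, rfl⟩
    exact ⟨y, hy, hyn, rfl⟩

lemma exists_gPathAct_single_eq_single_nil (hc : G.ExclusiveCycle cv cl)
    (hv : v ∈ G.pathVerts cv cl) {L : List G.E} {x : List G.E × List G.E}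
    (hx : x ∈ G.Xset cv cl v) (hxL : x.1.length ≤ L.length)
    (hx0 : gPathAct K G v cl L (Finsupp.single x 1) ≠ 0) :
    ∃ q, gPathAct K G v cl L (Finsupp.single x 1) = Finsupp.single ([], q) 1 ∧
      G.IsPathFrom v q ∧ q ⊆ cl ∧ (q.length : ℤ) = L.length - G.degOf x := by
  obtain ⟨⟨p, q⟩, hz, hxz, hp, hzd⟩ := (gPathAct_single_eq_zero_or L hx).resolve_left hx0
  obtain rfl : p = [] := hp.trans (List.drop_eq_nil_of_le hxL)
  obtain ⟨hq, hqc⟩ := mem_Xset_nil_iff.1 hz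
  exact ⟨q, hxz, hq, hc.subset_of_isPathFrom hv hq hqc, by
    simp only [degOf, List.length_nil, Nat.cast_zero, zero_sub] at hzd ⊢; omega⟩

lemma gPathAct_single_eq_zero_of_ne (hc : G.ExclusiveCycle cv cl) (hv : v ∈ G.pathVerts cv cl)
    {L : List G.E} {x y : List G.E × List G.E} (hx : x ∈ G.Xset cv cl v)
    (hy : y ∈ G.Xset cv cl v) (hyx : y ≠ x) (hdeg : G.degOf y = G.degOf x)
    (hxL : x.1.length ≤ L.length) (hyL : y.1.length ≤ L.length)
    (hx0 : gPathAct K G v cl L (Finsupp.single x 1) ≠ 0) :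
    gPathAct K G v cl L (Finsupp.single y 1) = 0 := by
  by_contra hy0
  obtain ⟨q, hxq, hq, hqc, hqlen⟩ := exists_gPathAct_single_eq_single_nil hc hv hx hxL hx0
  obtain ⟨q', hyq, hq', hqc', hqlen'⟩ := exists_gPathAct_single_eq_single_nil hc hv hy hyL hy0
  obtain rfl : q' = q := eq_of_isPathFrom_of_subset hc.1.2.2.2 hq' hq hqc' hqc (by omega)
  exact hyx (eq_of_gPathAct_single_eq L hy hx hyq hxq)

lemma exists_single_nil_mem (hc : G.ExclusiveCycle cv cl) (hv : v ∈ G.pathVerts cv cl)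
    {P : Submodule K (MFree K G)} (hgact : ∀ f, ∀ m ∈ P, actM K G (gAct K G v cl f) m ∈ P)
    {m : MFree K G} {n : ℤ} (hmP : m ∈ P) (hm : m ∈ degComp K G cv cl v n) (hm0 : m ≠ 0) :
    ∃ q, Finsupp.single ([], q) (1 : K) ∈ P := by
  rw [degComp_eq_supported, Finsupp.mem_supported] at hm
  obtain ⟨⟨p, q⟩, hx⟩ := Finsupp.support_nonempty_iff.2 hm0
  obtain ⟨hxX, hxn⟩ := hm hx
  obtain ⟨r, hrlen, hr, hrc⟩ :=
    hc.1.exists_path_length (m.support.sup fun y => y.1.length) hxX.1.2.2.2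
  have hlen : ∀ y ∈ m.support, y.1.length ≤ (p ++ r).length := fun y hy =>
    (Finset.le_sup (f := fun y => y.1.length) hy).trans (by simp [hrlen])
  have hLx : gPathAct K G v cl (p ++ r) (Finsupp.single (p, q) 1) =
      Finsupp.single ([], q ++ r) 1 := by
    rw [gPathAct_append_single, gPathAct_single_nil v cl hr hrc]
  have hLm : gPathAct K G v cl (p ++ r) m = m (p, q) • Finsupp.single ([], q ++ r) 1 := by
    conv_lhs => rw [← gPathActₗ_apply, ← m.sum_single]
    rw [Finsupp.sum, map_sum, Finset.sum_eq_single_of_mem _ hx, ← Finsupp.smul_single_one,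
      map_smul, gPathActₗ_apply, hLx]
    intro y hy hyx
    rw [← Finsupp.smul_single_one, map_smul, gPathActₗ_apply,
      gPathAct_single_eq_zero_of_ne hc hv hxX (hm hy).1 hyx ((hm hy).2.trans hxn.symm)
        (hlen _ hx) (hlen y hy) (by rw [hLx]; exact Finsupp.single_ne_zero.2 one_ne_zero),
      smul_zero]
  have hmem := P.smul_mem (m (p, q))⁻¹ (hLm ▸ gPathAct_mem v cl hgact (p ++ r) hmP)
  rw [smul_smul, inv_mul_cancel₀ (Finsupp.mem_support_iff.1 hx), one_smul] at hmem
  exact ⟨_, hmem⟩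

end Exclusive

section Edge

open DiGraph

variable {K G} {cv : G.V} {cl : List G.E} {v : G.V} {P : Submodule K (MFree K G)}

lemma single_nil_mem_of_append_mem (heact : ∀ f, ∀ m ∈ P, actM K G (eAct K G v f) m ∈ P) :
    ∀ {q : List G.E} (r : List G.E),
      Finsupp.single ([], q ++ r) (1 : K) ∈ P → Finsupp.single ([], q) (1 : K) ∈ P
  | _, [], h => by simpa using h
  | q, f :: r, h => by
    have h' := heact f _ (single_nil_mem_of_append_mem heact r (q := q ++ [f]) (by simpa using h))
    rwa [actM_single_one, eAct, if_pos (by simp [startVtx]), red_singleton_append_singleton] at h'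

lemma single_mem_of_single_nil_mem (heact : ∀ f, ∀ m ∈ P, actM K G (eAct K G v f) m ∈ P) :
    ∀ {p q : List G.E}, (p, q) ∈ G.Xset cv cl v →
      Finsupp.single ([], q) (1 : K) ∈ P → Finsupp.single (p, q) (1 : K) ∈ P
  | [], _, _, h => h
  | f :: t, q, hx, h => by
    have h' := heact f _ (single_mem_of_single_nil_mem heact (mem_Xset_of_cons_mem hx) h)
    rwa [actM_single_one, eAct, if_pos (startVtx_tail_of_memY hx.1), hx.2] at h'

end Edge

theorem Nc_graded_simple (cv : G.V) (cl : List G.E)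
    (hc : G.ExclusiveCycle cv cl) (v : G.V) (hv : v ∈ G.pathVerts cv cl)
    (P : Submodule K (MFree K G)) (hle : P ≤ spanX K G cv cl v)
    (heact : ∀ (f : G.E), ∀ m ∈ P, actM K G (eAct K G v f) m ∈ P)
    (hgact : ∀ (f : G.E), ∀ m ∈ P, actM K G (gAct K G v cl f) m ∈ P)
    (hgraded : P = Submodule.span K
      {m : MFree K G | m ∈ P ∧ ∃ n : ℤ, m ∈ degComp K G cv cl v n})
    (hne : P ≠ ⊥) :
    P = spanX K G cv cl v := by
  obtain ⟨m, ⟨hmP, n, hmn⟩, hm0⟩ :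
      ∃ m, (m ∈ P ∧ ∃ n : ℤ, m ∈ degComp K G cv cl v n) ∧ m ≠ 0 := by
    by_contra! h
    exact hne (hgraded.trans (Submodule.span_eq_bot.2 h))
  obtain ⟨q₀, hq₀⟩ := exists_single_nil_mem hc hv hgact hmP hmn hm0
  have hnil : Finsupp.single ([], []) (1 : K) ∈ P := single_nil_mem_of_append_mem heact q₀ hq₀
  refine le_antisymm hle (Submodule.span_le.2 ?_)
  rintro _ ⟨⟨p, q⟩, hx, rfl⟩
  obtain ⟨-, hq, -, hqc⟩ := hx.1
  have hup := gPathAct_mem v cl hgact q hnil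
  rw [gPathAct_single_nil v cl (q := []) (by simpa using hq)
    (hc.subset_of_isPathFrom hv hq hqc)] at hup
  exact single_mem_of_single_nil_mem heact hx hup

end
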